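/- Let (A, ∘, B) be a quadratic Novikov algebra and D: A → A a linear isomorphism such that D(a∘b) = (1/2) a∘D(b) and B(D(a),b) = -B(a,D(b)) for all a,b ∈ A. Define ω(a,b) = B(D(a),b). Then (A, ∘, ω) is a quasi-Frobenius Novikov algebra, i.e., ω is a nondegenerate skewsymmetric bilinear form satisfying ω(a∘b,c) - ω(a⋆c,b) + ω(c∘b,a) = 0 for all a,b,c ∈ A. -/
import Mathlib


/-- If D is a bijective linear map on a quadratic Novikov algebra with
D(a∘b) = (1/2) a∘D(b) and B(D(a),b) = -B(a,D(b)), then ω(a,b) := B(D(a),b) makes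
(A, ∘, ω) a quasi-Frobenius Novikov algebra: ω is nondegenerate, skewsymmetric and
satisfies ω(a∘b,c) - ω(a⋆c,b) + ω(c∘b,a) = 0. -/
theorem quadratic_novikov_quasiFrobenius
    {k A : Type*} [Field k] [CharZero k] [AddCommGroup A] [Module k A]
    (mul : A →ₗ[k] A →ₗ[k] A) (B : LinearMap.BilinForm k A)
    (hnov1 : ∀ a b c, mul (mul a b) c - mul a (mul b c) = mul (mul b a) c - mul b (mul a c))
    (hnov2 : ∀ a b c, mul (mul a b) c = mul (mul a c) b)
    (hsym : ∀ a b, B a b = B b a)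
    (hnd : ∀ a, (∀ b, B a b = 0) → a = 0)
    (hinv : ∀ a b c, B (mul a b) c = -(B b (mul a c + mul c a)))
    (D : A →ₗ[k] A) (hbij : Function.Bijective D)
    (hhalf : ∀ a b, D (mul a b) = (2 : k)⁻¹ • mul a (D b))
    (hskew : ∀ a b, B (D a) b = -(B a (D b))) :
    (∀ a, (∀ b, B (D a) b = 0) → a = 0) ∧
    (∀ a b, B (D a) b = -(B (D b) a)) ∧
    (∀ a b c, B (D (mul a b)) c - B (D (mul a c + mul c a)) b + B (D (mul c b)) a = 0) := by
  -- Auxiliary: value of the "derived" product under B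
  have L : ∀ x y z : A, B (D (mul x y)) z
      = -((2 : k)⁻¹ * B (D y) (mul x z + mul z x)) := by
    intro x y z
    rw [hhalf, map_smul, LinearMap.smul_apply, smul_eq_mul, hinv]
    ring
  have key : ∀ x y z : A, B (D x) (mul y z + mul z y)
      = (2 : k)⁻¹ * B (D z) (mul y x + mul x y)
        + (2 : k)⁻¹ * B (D y) (mul z x + mul x z) := by
    intro x y z
    have h1 : B (D x) (mul y z + mul z y)
        = -(B x (D (mul y z)) + B x (D (mul z y))) := by
      rw [hskew, map_add, map_add]
    have h2 : B x (D (mul y z)) = -((2 : k)⁻¹ * B (D z) (mul y x + mul x y)) := by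
      rw [hhalf, map_smul, smul_eq_mul, hsym, hinv]; ring
    have h3 : B x (D (mul z y)) = -((2 : k)⁻¹ * B (D y) (mul z x + mul x z)) := by
      rw [hhalf, map_smul, smul_eq_mul, hsym, hinv]; ring
    rw [h1, h2, h3]; ring
  refine ⟨?_, ?_, ?_⟩
  · intro a h
    have : D a = 0 := hnd _ h
    have h0 : D a = D 0 := by simpa using this
    exact hbij.injective h0
  · intro a b
    rw [hskew, hsym]
  · intro a b c
    have hkey := key b a c
    rw [show D (mul a c + mul c a) = D (mul a c) + D (mul c a) from map_add D _ _,
        map_add, LinearMap.add_apply, L a b c, L a c b, L c a b, L c b a]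
    simp only [map_add] at hkey ⊢
    linear_combination -hkey
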